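/- Let K ⊆ ℝⁿ be closed, σ > 1, K_σ = {x ∉ K : ρ_K^φ(x) ≥ σ}, and for t ∈ ℝ define h_t(y) = t y + (1 − t) ξ_K^φ(y) (single-valued on K_σ). Then for every 0 < t < σ, the map h_t restricted to K_σ is a homeomorphism onto K_{σ/t}, with inverse h_{1/t} restricted to K_{σ/t}. -/

import Mathlib

open Set Filter Metric MeasureTheory Topology ENNReal

noncomputable section

abbrev Euc (n : ℕ) := EuclideanSpace ℝ (Fin n)

def IsNorm {n : ℕ} (φ : Euc n → ℝ) : Prop :=
  (∀ x, φ x = 0 ↔ x = 0) ∧ (∀ (c : ℝ) (x : Euc n), φ (c • x) = |c| * φ x) ∧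
    (∀ x y, φ (x + y) ≤ φ x + φ y)

def StrictlyConvexNorm {n : ℕ} (φ : Euc n → ℝ) : Prop :=
  IsNorm φ ∧ ∀ a b, φ (a + b) = φ a + φ b → φ b • a = φ a • b

def UniformlyConvexNorm {n : ℕ} (φ : Euc n → ℝ) : Prop :=
  IsNorm φ ∧ ∃ γ : ℝ, 0 < γ ∧ ConvexOn ℝ Set.univ (fun x => φ x - γ * ‖x‖)

def distφ {n : ℕ} (φ : Euc n → ℝ) (K : Set (Euc n)) (x : Euc n) : ℝ :=
  sInf {r | ∃ y ∈ K, r = φ (x - y)}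

def nearφ {n : ℕ} (φ : Euc n → ℝ) (K : Set (Euc n)) (x : Euc n) : Set (Euc n) :=
  {a ∈ K | φ (x - a) = distφ φ K x}

def rhoφ {n : ℕ} (φ : Euc n → ℝ) (K : Set (Euc n)) (x : Euc n) : ℝ≥0∞ :=
  sSup {r : ℝ≥0∞ | ∃ s : ℝ, ∃ a ∈ nearφ φ K x,
    r = ENNReal.ofReal s ∧ distφ φ K (a + s • (x - a)) = s * distφ φ K x}

def normalBundle {n : ℕ} (φ : Euc n → ℝ) (K : Set (Euc n)) : Set (Euc n × Euc n) :=
  {p | p.1 ∈ K ∧ φ p.2 = 1 ∧ ∃ s : ℝ, 0 < s ∧ distφ φ K (p.1 + s • p.2) = s}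

def reachφ {n : ℕ} (φ : Euc n → ℝ) (K : Set (Euc n)) (p : Euc n × Euc n) : ℝ≥0∞ :=
  sSup {r : ℝ≥0∞ | ∃ s : ℝ, 0 < s ∧ r = ENNReal.ofReal s ∧ distφ φ K (p.1 + s • p.2) = s}

def cutLocus {n : ℕ} (φ : Euc n → ℝ) (K : Set (Euc n)) : Set (Euc n) :=
  {x | ∃ p ∈ normalBundle φ K, reachφ φ K p ≠ ⊤ ∧
    x = p.1 + (reachφ φ K p).toReal • p.2}

def PtTwiceDiffAt {n : ℕ} (f : Euc n → ℝ) (x : Euc n) : Prop :=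
  ∃ (L : Euc n →L[ℝ] ℝ) (Q : Euc n →L[ℝ] Euc n →L[ℝ] ℝ),
    Tendsto (fun y => |f y - f x - L (y - x) - Q (y - x) (y - x)| / ‖y - x‖ ^ 2)
      (𝓝[≠] x) (𝓝 0)

/-!
For `x ∉ K` with `ρ(x) > 1` the nearest point `a = ξ(x)` is unique and `δ` grows linearly along
the ray from `a` through `x` up to parameter `ρ(x)`. By strict convexity of `φ`, every point
`y = a + s • (x - a)` with `0 < s < ρ(x)` again has `a` as its unique nearest point, and the ray
from `a` through `y` is the same ray reparametrized by `s`, so `ρ(y) ≥ ρ(x) / s`. Hence `h_t` maps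
`K_σ` into `K_{σ/t}` without changing `ξ`, and `h_{1/t}` undoes it. Continuity comes from
continuity of the nearest-point map where it is single-valued, a compactness argument on the
`φ`-sublevel sets of `K`.
-/

namespace IsNorm

variable {n : ℕ} {φ : Euc n → ℝ}

def toSeminorm (hφ : IsNorm φ) : Seminorm ℝ (Euc n) :=
  Seminorm.of φ hφ.2.2 fun c x => by rw [hφ.2.1, Real.norm_eq_abs]

theorem map_zero (hφ : IsNorm φ) : φ 0 = 0 :=
  (hφ.1 0).2 rfl

theorem nonneg (hφ : IsNorm φ) (x : Euc n) : 0 ≤ φ x :=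
  apply_nonneg hφ.toSeminorm x

theorem pos (hφ : IsNorm φ) {x : Euc n} (hx : x ≠ 0) : 0 < φ x :=
  (hφ.nonneg x).lt_of_ne' fun h => hx ((hφ.1 x).1 h)

theorem smul_of_nonneg (hφ : IsNorm φ) {c : ℝ} (hc : 0 ≤ c) (x : Euc n) : φ (c • x) = c * φ x := by
  rw [hφ.2.1, abs_of_nonneg hc]

theorem sub_le_sub_add_sub (hφ : IsNorm φ) (x y z : Euc n) : φ (x - z) ≤ φ (x - y) + φ (y - z) := by
  simpa using hφ.2.2 (x - y) (y - z)

theorem continuous (hφ : IsNorm φ) : Continuous φ :=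
  continuousOn_univ.mp (hφ.toSeminorm.convexOn.continuousOn isOpen_univ)

theorem exists_pos_mul_norm_le (hφ : IsNorm φ) : ∃ c > 0, ∀ u : Euc n, c * ‖u‖ ≤ φ u := by
  rcases subsingleton_or_nontrivial (Euc n) with hs | hs
  · exact ⟨1, one_pos, fun u => by simp [Subsingleton.elim u 0, hφ.map_zero]⟩
  obtain ⟨z, hz, hmin⟩ := (isCompact_sphere (0 : Euc n) 1).exists_isMinOn
    (NormedSpace.sphere_nonempty.mpr zero_le_one) hφ.continuous.continuousOn
  have hz0 : z ≠ 0 := ne_zero_of_mem_unit_sphere ⟨z, hz⟩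
  refine ⟨φ z, hφ.pos hz0, fun u => ?_⟩
  rcases eq_or_ne u 0 with rfl | hu
  · simp [hφ.map_zero]
  have hnu : 0 < ‖u‖ := norm_pos_iff.mpr hu
  have hmem : ‖u‖⁻¹ • u ∈ sphere (0 : Euc n) 1 := by
    simp [norm_smul, inv_mul_cancel₀ hnu.ne']
  have : φ z ≤ φ (‖u‖⁻¹ • u) := hmin hmem
  rw [hφ.smul_of_nonneg (inv_nonneg.mpr hnu.le)] at this
  rwa [le_inv_mul_iff₀ hnu, mul_comm] at this

end IsNorm

section Distance

variable {n : ℕ} {φ : Euc n → ℝ} {K : Set (Euc n)}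

theorem distφ_le (hφ : IsNorm φ) (x : Euc n) {a : Euc n} (ha : a ∈ K) :
    distφ φ K x ≤ φ (x - a) :=
  csInf_le ⟨0, by rintro r ⟨y, -, rfl⟩; exact hφ.nonneg _⟩ ⟨a, ha, rfl⟩

theorem le_distφ (hK : K.Nonempty) {x : Euc n} {c : ℝ} (h : ∀ b ∈ K, c ≤ φ (x - b)) :
    c ≤ distφ φ K x := by
  obtain ⟨b, hb⟩ := hK
  exact le_csInf ⟨_, b, hb, rfl⟩ (by rintro r ⟨y, hy, rfl⟩; exact h y hy)

theorem distφ_pos (hφ : IsNorm φ) {x a : Euc n} (hx : x ∉ K) (ha : a ∈ nearφ φ K x) :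
    0 < distφ φ K x :=
  ha.2 ▸ hφ.pos (sub_ne_zero.mpr fun h => hx (h ▸ ha.1))

theorem isCompact_inter_sublevel (hφ : IsNorm φ) (hK : IsClosed K) (x : Euc n) (R : ℝ) :
    IsCompact {y ∈ K | φ (x - y) ≤ R} := by
  obtain ⟨c, hc, hcφ⟩ := hφ.exists_pos_mul_norm_le
  refine Metric.isCompact_of_isClosed_isBounded
    (hK.inter (isClosed_le (hφ.continuous.comp (continuous_const.sub continuous_id))
      continuous_const)) ((isBounded_closedBall (x := x) (r := R / c)).subset ?_)
  rintro y ⟨-, hy⟩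
  rw [mem_closedBall, dist_comm, dist_eq_norm, le_div_iff₀' hc]
  exact (hcφ _).trans hy

theorem continuousOn_of_nearφ_eq_singleton (hφ : IsNorm φ) (hK : IsClosed K)
    {f : Euc n → Euc n} {U : Set (Euc n)} (hf : ∀ x ∈ U, nearφ φ K x = {f x}) :
    ContinuousOn f U := by
  intro x₀ hx₀
  have hnear : ∀ x ∈ U, f x ∈ nearφ φ K x := fun x hx => (hf x hx).symm ▸ rfl
  have ha₀ := hnear x₀ hx₀
  set d := distφ φ K x₀
  have hbound : ∀ x ∈ U, φ (x₀ - f x) ≤ d + (φ (x₀ - x) + φ (x - x₀)) := fun x hx => by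
    have h1 := hφ.sub_le_sub_add_sub x₀ x (f x)
    have h2 := distφ_le hφ x ha₀.1
    have h3 := hφ.sub_le_sub_add_sub x x₀ (f x₀)
    rw [(hnear x hx).2] at h1
    rw [ha₀.2] at h3
    linarith
  have hsmall : Tendsto (fun x => φ (x₀ - x) + φ (x - x₀)) (𝓝[U] x₀) (𝓝 0) := by
    have hc : Continuous fun x => φ (x₀ - x) + φ (x - x₀) :=
      (hφ.continuous.comp (continuous_const.sub continuous_id)).add
        (hφ.continuous.comp (continuous_id.sub continuous_const))
    simpa [hφ.map_zero] using (hc.tendsto x₀).mono_left nhdsWithin_le_nhds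
  have hev : ∀ r > 0, ∀ᶠ x in 𝓝[U] x₀, f x ∈ {y ∈ K | φ (x₀ - y) ≤ d + r} := fun r hr => by
    filter_upwards [hsmall.eventually (gt_mem_nhds hr), self_mem_nhdsWithin] with x hxr hx
    exact ⟨(hnear x hx).1, (hbound x hx).trans (by linarith)⟩
  -- `f` eventually lies in a compact set, and its cluster points are nearest points of `x₀`.
  refine (isCompact_inter_sublevel hφ hK x₀ (d + 1)).tendsto_nhds_of_unique_mapClusterPt
    (hev 1 one_pos) fun b _ hb => ?_
  have hb_sublevel : ∀ r > 0, b ∈ {y ∈ K | φ (x₀ - y) ≤ d + r} := fun r hr =>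
    (isCompact_inter_sublevel hφ hK x₀ (d + r)).isClosed.mem_of_mapClusterPt hb (hev r hr)
  have hbK : b ∈ K := (hb_sublevel 1 one_pos).1
  have hb_near : b ∈ nearφ φ K x₀ :=
    ⟨hbK, le_antisymm (le_of_forall_pos_le_add fun r hr => (hb_sublevel r hr).2)
      (distφ_le hφ x₀ hbK)⟩
  simpa [hf x₀ hx₀] using hb_near

end Distance

section Segment

variable {n : ℕ} {φ : Euc n → ℝ} {K : Set (Euc n)} {x a : Euc n} {S s : ℝ}

theorem distφ_homothety_of_le (hφ : IsNorm φ) (ha : a ∈ nearφ φ K x)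
    (hS : distφ φ K (a + S • (x - a)) = S * distφ φ K x) (hs : 0 ≤ s) (hsS : s ≤ S) :
    distφ φ K (a + s • (x - a)) = s * distφ φ K x ∧ a ∈ nearφ φ K (a + s • (x - a)) := by
  have hya : φ (a + s • (x - a) - a) = s * distφ φ K x := by
    rw [add_sub_cancel_left, hφ.smul_of_nonneg hs, ha.2]
  have hle := hya ▸ distφ_le hφ (a + s • (x - a)) ha.1
  -- Via the triangle inequality through `a + s • (x - a)`, any point of `K` closer to it than `a`
  -- would be closer to `a + S • (x - a)` than `S * distφ φ K x`.
  have hge : s * distφ φ K x ≤ distφ φ K (a + s • (x - a)) := by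
    refine le_distφ ⟨a, ha.1⟩ fun b hb => ?_
    have htri := (distφ_le hφ (a + S • (x - a)) hb).trans
      (hφ.sub_le_sub_add_sub _ (a + s • (x - a)) b)
    have hseg : a + S • (x - a) - (a + s • (x - a)) = (S - s) • (x - a) := by module
    rw [hS, hseg, hφ.smul_of_nonneg (sub_nonneg.mpr hsS), ha.2] at htri
    linarith
  have heq := le_antisymm hle hge
  exact ⟨heq, ha.1, hya.trans heq.symm⟩

theorem nearφ_homothety_of_lt (hφ : StrictlyConvexNorm φ) (hx : x ∉ K) (ha : a ∈ nearφ φ K x)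
    (hS : distφ φ K (a + S • (x - a)) = S * distφ φ K x) (hs : 0 < s) (hsS : s < S) :
    nearφ φ K (a + s • (x - a)) = {a} := by
  have hd := distφ_pos hφ.1 hx ha
  obtain ⟨hdy, hay⟩ := distφ_homothety_of_le hφ.1 ha hS hs.le hsS.le
  refine eq_singleton_iff_unique_mem.mpr ⟨hay, fun b hb => ?_⟩
  set y := a + s • (x - a)
  set u := a + S • (x - a) - y
  have hu : u = (S - s) • (x - a) := by simp only [u, y]; module
  have hφu : φ u = (S - s) * distφ φ K x := by
    rw [hu, hφ.1.smul_of_nonneg (sub_nonneg.mpr hsS.le), ha.2]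
  have hφv : φ (y - b) = s * distφ φ K x := hb.2.trans hdy
  -- `b` attains equality in the triangle inequality for `u + (y - b)`, so by strict convexity
  -- `y - b` is parallel to `u`, hence to `x - a`.
  have hadd : φ (u + (y - b)) = φ u + φ (y - b) := by
    refine le_antisymm (hφ.1.2.2 _ _) ?_
    have : u + (y - b) = a + S • (x - a) - b := by simp only [u]; abel
    rw [this, hφu, hφv, ← add_mul, sub_add_cancel, ← hS]
    exact distφ_le hφ.1 _ hb.1
  have hpar := hφ.2 _ _ hadd
  rw [hφu, hφv, hu, smul_smul] at hpar
  have hne : (S - s) * distφ φ K x ≠ 0 := (mul_pos (sub_pos.mpr hsS) hd).ne'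
  have hyb : y - b = y - a := by
    refine smul_right_injective _ hne ?_
    simp only [y, add_sub_cancel_left, ← hpar, smul_smul]
    congr 1
    ring
  exact sub_right_injective hyb

end Segment

section Reach

variable {n : ℕ} {φ : Euc n → ℝ} {K : Set (Euc n)} {x a : Euc n}

theorem ofReal_le_rhoφ {S : ℝ} (ha : a ∈ nearφ φ K x)
    (hS : distφ φ K (a + S • (x - a)) = S * distφ φ K x) : ENNReal.ofReal S ≤ rhoφ φ K x :=
  le_sSup ⟨S, a, ha, rfl, hS⟩

theorem exists_distφ_homothety_of_lt_rhoφ {m : ℝ} (hm : 0 ≤ m)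
    (h : ENNReal.ofReal m < rhoφ φ K x) :
    ∃ S, m < S ∧ ∃ a ∈ nearφ φ K x, distφ φ K (a + S • (x - a)) = S * distφ φ K x := by
  obtain ⟨_, ⟨S, a, ha, rfl, hS⟩, hlt⟩ := lt_sSup_iff.mp h
  exact ⟨S, (ENNReal.ofReal_lt_ofReal_iff_of_nonneg hm).mp hlt, a, ha, hS⟩

theorem homothety_of_lt_rhoφ (hφ : StrictlyConvexNorm φ) (hx : x ∉ K)
    (hnear : nearφ φ K x = {a}) {s : ℝ} (hs : 0 < s) (hsρ : ENNReal.ofReal s < rhoφ φ K x) :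
    a + s • (x - a) ∉ K ∧ nearφ φ K (a + s • (x - a)) = {a} ∧
      rhoφ φ K x ≤ rhoφ φ K (a + s • (x - a)) * ENNReal.ofReal s := by
  obtain ⟨S₀, hsS₀, a', ha', hS₀⟩ := exists_distφ_homothety_of_lt_rhoφ hs.le hsρ
  rw [hnear, mem_singleton_iff] at ha'
  subst a'
  have ha : a ∈ nearφ φ K x := hnear ▸ rfl
  have hd := distφ_pos hφ.1 hx ha
  obtain ⟨hdy, hay⟩ := distφ_homothety_of_le hφ.1 ha hS₀ hs.le hsS₀.le
  refine ⟨fun hy => ?_, nearφ_homothety_of_lt hφ hx ha hS₀ hs hsS₀, sSup_le ?_⟩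
  · have := distφ_le hφ.1 (a + s • (x - a)) hy
    rw [sub_self, hφ.1.map_zero, hdy] at this
    exact (mul_pos hs hd).not_ge this
  -- The rays from `a` through `x` and through `a + s • (x - a)` coincide, up to scaling by `s`.
  rintro _ ⟨S, a'', ha'', rfl, hS⟩
  rw [hnear, mem_singleton_iff] at ha''
  subst a''
  have hscaled : distφ φ K (a + (S / s) • (a + s • (x - a) - a)) =
      S / s * distφ φ K (a + s • (x - a)) := by
    rw [add_sub_cancel_left, smul_smul, div_mul_cancel₀ _ hs.ne', hS, hdy]
    field_simp
  calc ENNReal.ofReal S = ENNReal.ofReal (S / s) * ENNReal.ofReal s := by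
        rw [← ENNReal.ofReal_mul' hs.le, div_mul_cancel₀ _ hs.ne']
    _ ≤ _ := by gcongr; exact ofReal_le_rhoφ hay hscaled

end Reach

section Homothety

variable {n : ℕ} {φ : Euc n → ℝ} {K : Set (Euc n)}

def rhoSuperlevelSet (φ : Euc n → ℝ) (K : Set (Euc n)) (τ : ℝ) : Set (Euc n) :=
  {x | x ∉ K ∧ ENNReal.ofReal τ ≤ rhoφ φ K x}

theorem one_lt_rhoφ_of_mem_rhoSuperlevelSet {τ : ℝ} (hτ : 1 < τ) {x : Euc n}
    (hx : x ∈ rhoSuperlevelSet φ K τ) : 1 < rhoφ φ K x :=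
  (ENNReal.one_lt_ofReal.mpr hτ).trans_le hx.2

theorem homothety_mem_rhoSuperlevelSet (hφ : StrictlyConvexNorm φ) {f : Euc n → Euc n}
    (hf : ∀ x, 1 < rhoφ φ K x → nearφ φ K x = {f x}) {τ s : ℝ} (hτ : 1 < τ) (hs : 0 < s)
    (hsτ : s < τ) {x : Euc n} (hx : x ∈ rhoSuperlevelSet φ K τ) :
    s • x + (1 - s) • f x ∈ rhoSuperlevelSet φ K (τ / s) ∧ f (s • x + (1 - s) • f x) = f x := by
  have hsρ : ENNReal.ofReal s < rhoφ φ K x :=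
    ((ENNReal.ofReal_lt_ofReal_iff (hs.trans hsτ)).mpr hsτ).trans_le hx.2
  obtain ⟨hyK, hnear, hρ⟩ :=
    homothety_of_lt_rhoφ hφ hx.1 (hf x (one_lt_rhoφ_of_mem_rhoSuperlevelSet hτ hx)) hs hsρ
  rw [show f x + s • (x - f x) = s • x + (1 - s) • f x by module] at hyK hnear hρ
  have hy : s • x + (1 - s) • f x ∈ rhoSuperlevelSet φ K (τ / s) := by
    refine ⟨hyK, ?_⟩
    rw [ENNReal.ofReal_div_of_pos hs]
    exact ENNReal.div_le_of_le_mul (hx.2.trans hρ)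
  have hfy := hf _ (one_lt_rhoφ_of_mem_rhoSuperlevelSet ((one_lt_div hs).mpr hsτ) hy)
  exact ⟨hy, (singleton_eq_singleton_iff.mp (hfy.symm.trans hnear))⟩

theorem smul_add_smul_of_mul_eq_one {s t : ℝ} (hst : s * t = 1) (x a : Euc n) :
    s • (t • x + (1 - t) • a) + (1 - s) • a = x := by
  match_scalars
  · linear_combination hst
  · linear_combination -hst

end Homothety

theorem stmt8 {n : ℕ} (φ : Euc n → ℝ) (hφ : StrictlyConvexNorm φ) (K : Set (Euc n))
    (hK : IsClosed K) (σ : ℝ) (hσ : 1 < σ)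
    (f : Euc n → Euc n) (hf : ∀ x : Euc n, 1 < rhoφ φ K x → nearφ φ K x = {f x})
    (h : ℝ → Euc n → Euc n) (hh : ∀ (t : ℝ) (y : Euc n), h t y = t • y + (1 - t) • f y)
    (Kσ : ℝ → Set (Euc n))
    (hKσ : ∀ s : ℝ, Kσ s = {x | x ∉ K ∧ ENNReal.ofReal s ≤ rhoφ φ K x}) :
    ∀ t : ℝ, 0 < t → t < σ →
      Set.BijOn (h t) (Kσ σ) (Kσ (σ / t)) ∧
      ContinuousOn (h t) (Kσ σ) ∧
      ContinuousOn (h (1 / t)) (Kσ (σ / t)) ∧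
      (∀ x ∈ Kσ σ, h (1 / t) (h t x) = x) ∧
      (∀ y ∈ Kσ (σ / t), h t (h (1 / t) y) = y) := by
  intro t ht htσ
  obtain rfl : Kσ = rhoSuperlevelSet φ K := funext hKσ
  obtain rfl : h = fun t y => t • y + (1 - t) • f y := funext fun t => funext (hh t)
  have hσt : 1 < σ / t := (one_lt_div ht).mpr htσ
  have hfwd := fun x (hx : x ∈ rhoSuperlevelSet φ K σ) =>
    homothety_mem_rhoSuperlevelSet hφ hf hσ ht htσ hx
  have hbwd : ∀ y ∈ rhoSuperlevelSet φ K (σ / t),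
      (1 / t) • y + (1 - 1 / t) • f y ∈ rhoSuperlevelSet φ K σ ∧
        f ((1 / t) • y + (1 - 1 / t) • f y) = f y := fun y hy => by
    simpa only [div_div_div_cancel_right₀ ht.ne', div_one] using
      homothety_mem_rhoSuperlevelSet hφ hf hσt (one_div_pos.mpr ht)
        (div_lt_div_of_pos_right hσ ht) hy
  have hinv : InvOn (fun y => (1 / t) • y + (1 - 1 / t) • f y) (fun y => t • y + (1 - t) • f y)
      (rhoSuperlevelSet φ K σ) (rhoSuperlevelSet φ K (σ / t)) := by
    refine ⟨fun x hx => ?_, fun y hy => ?_⟩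
    · simp only [(hfwd x hx).2]
      exact smul_add_smul_of_mul_eq_one (one_div_mul_cancel ht.ne') x (f x)
    · simp only [(hbwd y hy).2]
      exact smul_add_smul_of_mul_eq_one (mul_one_div_cancel ht.ne') y (f y)
  have hcont : ∀ τ > 1, ∀ s : ℝ,
      ContinuousOn (fun y => s • y + (1 - s) • f y) (rhoSuperlevelSet φ K τ) := fun τ hτ s => by
    have hfc := continuousOn_of_nearφ_eq_singleton hφ.1 hK
      fun x hx => hf x (one_lt_rhoφ_of_mem_rhoSuperlevelSet hτ hx)
    fun_prop
  exact ⟨hinv.bijOn (fun x hx => (hfwd x hx).1) (fun y hy => (hbwd y hy).1), hcont σ hσ t,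
    hcont _ hσt _, hinv.1, hinv.2⟩
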